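/- arXiv:1811.01130 — 3 statements merged into one kernel-verified Lean document; each statement's English description precedes it below -/
import Mathlib

section
/- Suppose u, τ ∈ ℂ satisfy Re(τ) > 0, Im(τ) > 0 and (Re(τ) − Im(τ))/2 < Re(u) < 1 + (Re(τ) − Im(τ))/2. Then Υ(u; τ) = e^{πi(u − 1/2 − τ/4)} · ∫_{−∞}^{∞} e^{πiτy² + πy(τ − 2u + 1)}/(e^{πy} + e^{−πy}) dy. -/
open Complex Real MeasureTheory

noncomputable section

def chi (s : ℂ) : ℂ := (π : ℂ) ^ (s - 1/2) * Complex.Gamma ((1 - s)/2) / Complex.Gamma (s/2)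

def RSOmega : Set ℂ := {s : ℂ | s.im ≠ 0 ∨ (0 < s.re ∧ s.re < 1)}

def IsRSTheta (ϑ : ℂ → ℂ) : Prop :=
  DifferentiableOn ℂ ϑ RSOmega ∧ (∀ s ∈ RSOmega, Complex.exp (-2 * I * ϑ s) = chi s) ∧
    ϑ (1/2) = 0

def zetaSum (x : ℝ) (s : ℂ) : ℂ := ∑ n ∈ Finset.Icc 1 ⌊x⌋₊, (n : ℂ) ^ (-s)

def Upsilon (u τ : ℂ) : ℂ :=
  ∫ v : ℝ, Complex.exp (3 * (π:ℂ) * I / 4) *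
    (Complex.exp (-(π:ℂ) * I * τ * (1/2 + Complex.exp (3 * (π:ℂ) * I / 4) * v) ^ 2
        + 2 * (π:ℂ) * I * u * (1/2 + Complex.exp (3 * (π:ℂ) * I / 4) * v)) /
      (Complex.exp (2 * (π:ℂ) * I * (1/2 + Complex.exp (3 * (π:ℂ) * I / 4) * v)) - 1))

def G (u τ : ℂ) : ℂ :=
  τ ^ ((1:ℂ)/4) * Complex.exp (-(π:ℂ) * I * u ^ 2 / 2 + (π:ℂ) * I / 8) *
    Upsilon (τ ^ ((1:ℂ)/2) * u) τ

def Gderiv (k : ℕ) (u τ : ℂ) : ℂ := iteratedDeriv k (fun w => G w τ) u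

def hermiteH (n : ℕ) (x : ℂ) : ℂ :=
  (Nat.factorial n : ℂ) * ∑ j ∈ Finset.range (n / 2 + 1),
    (-1:ℂ) ^ j / ((Nat.factorial j : ℂ) * (Nat.factorial (n - 2*j) : ℂ)) * (2 * x) ^ (n - 2*j)

def obell (p : ℕ → ℂ) (i j : ℕ) : ℂ :=
  ∑ f ∈ (Finset.Nat.antidiagonalTuple j i).filter (fun f => ∀ l, 1 ≤ f l), ∏ l, p (f l)

def bernoulliPoly (n : ℕ) (x : ℂ) : ℂ := Polynomial.aeval x (Polynomial.bernoulli n)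

def fseq (σ : ℝ) (n : ℕ) : ℂ :=
  (bernoulliPoly (n+1) ((σ:ℂ)/2) + (-1:ℂ)^(n+1) * bernoulliPoly (n+1) ((1-(σ:ℂ))/2)) /
    (2*(n:ℂ)*((n:ℂ)+1))

def um (m : ℕ) (σ : ℝ) : ℂ :=
  (-2:ℂ)^m * ∑ k ∈ Finset.range (m+1), obell (fseq σ) m k / (Nat.factorial k : ℂ)

def seqA (j : ℕ) : ℂ := (-1:ℂ)^(j+1) / ((j:ℂ) + 2)

def seqB (j : ℕ) : ℂ := (-1:ℂ)^(j+1) / (j:ℂ)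

def dd (m r : ℕ) (σ : ℝ) : ℂ :=
  ∑ n ∈ Finset.Icc r m, (obell seqA n r / (Nat.factorial r : ℂ)) *
    ∑ k ∈ Finset.range (m - n + 1),
      (obell seqB (m - n) k / (Nat.factorial k : ℂ)) * ((σ:ℂ) - 1)^k

def qq (n ℓ : ℕ) (σ : ℝ) : ℂ :=
  ∑ m ∈ Finset.Icc (ℓ - n) (ℓ / 3), um m σ * dd (n - 2*m) (n + m - ℓ) σ

def PP (n k : ℕ) (x : ℂ) (σ : ℝ) : ℂ :=
  Complex.exp (3 * (π:ℂ) * I * (k:ℂ) / 4) * ∑ ℓ ∈ Finset.range (k/2 + 1),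
    (Nat.choose (3*n - 2*ℓ) (3*n - k) : ℂ) * (-1:ℂ)^(n + ℓ) * 2^(2*ℓ) / 2^k *
      qq n ℓ σ * hermiteH (k - 2*ℓ) (Complex.exp (-(π:ℂ) * I / 4) * x)

def IsAk (s : ℂ) (a : ℕ → ℂ) : Prop :=
  a 0 = 1 ∧ ∀ k : ℕ, ((k:ℂ) + 1) * (Real.sqrt s.im : ℂ) * a (k+1) =
    -((k:ℂ) + 1 - (s.re:ℂ)) * a k + I * (if 2 ≤ k then a (k-2) else 0)

def IsPsi (Ψ : ℂ → ℂ) : Prop :=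
  Differentiable ℂ Ψ ∧ ∀ u : ℂ, Complex.cos ((π:ℂ)*u) ≠ 0 →
    Ψ u = Complex.cos ((π:ℂ)*(u^2/2 - u - 1/8)) / Complex.cos ((π:ℂ)*u)

def wfun (s z : ℂ) : ℂ :=
  Complex.exp ((s - 1) * Complex.log (1 + z / (Real.sqrt s.im : ℂ))
    - I * (Real.sqrt s.im : ℂ) * z + I * z^2 / 2)

def rn (n : ℕ) (s z : ℂ) : ℂ :=
  wfun s z - ∑ k ∈ Finset.range n, (iteratedDeriv k (wfun s) 0 / (Nat.factorial k : ℂ)) * z^k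

def GammaOmega : Set ℂ := {s : ℂ | s.im ≠ 0 ∨ 0 < s.re}

def IsLogGamma (L : ℂ → ℂ) : Prop :=
  DifferentiableOn ℂ L GammaOmega ∧ (∀ s ∈ GammaOmega, Complex.exp (L s) = Complex.Gamma s) ∧
    L 1 = 0

def gseq (σ : ℝ) (n : ℕ) : ℂ := -(bernoulliPoly (n+1) (σ:ℂ)) / ((n:ℂ)*((n:ℂ)+1))

def gammam (m : ℕ) (σ : ℝ) : ℂ :=
  I^m * ∑ k ∈ Finset.range (m+1), obell (gseq σ) m k / (Nat.factorial k : ℂ)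

/-!
Writing `z = 1/2 + i y`, the integrand of `Υ(u; τ)` on the line through `1/2` in direction
`e^{3πi/4}` becomes `e^{πi(u - 1/2 - τ/4)} h(y)`, where
`h(y) = e^{πiτy² + πy(τ-2u+1)} / (2 cosh πy)` is `mordellKernel u τ`, integrated over the ray
`y ∈ e^{iπ/4} ℝ`; it remains to rotate this ray onto the real axis.
For `F(θ) = ∫ e^{iθ} h(e^{iθ} t) dt` one has
`∂_θ (e^{iθ} h(e^{iθ} t)) = ∂_t (i t e^{iθ} h(e^{iθ} t))`, so `F' = 0` once `h` and `h'` decay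
integrably along the rays, uniformly in `θ ∈ [0, π/4]`. They do: in the sector `|Im w| ≤ |Re w|`
we have `|cosh w|² = cosh² (Re w) - sin² (Im w) ≥ cosh² (Re w) / 2`, so `cosh (πy)` stays away
from `0` and `tanh (πy)` is bounded, while `Re (iτ y²) ≤ -min (Re τ, Im τ) |y|²` for
`0 ≤ arg y ≤ π/4` because `Re τ, Im τ > 0`.
-/

open Set Filter

section RayRotation

variable {f : ℂ → ℂ} {θ t : ℝ}

lemma hasDerivAt_ray_angle (hf : DifferentiableAt ℂ f (cexp (θ * I) * t)) :
    HasDerivAt (fun φ : ℝ => cexp (φ * I) * f (cexp (φ * I) * t))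
      (I * cexp (θ * I) * (f (cexp (θ * I) * t) +
        cexp (θ * I) * t * deriv f (cexp (θ * I) * t))) θ := by
  have he : HasDerivAt (fun φ : ℝ => cexp (φ * I)) (cexp (θ * I) * I) θ := by
    simpa using ((hasDerivAt_id θ).ofReal_comp.mul_const I).cexp
  have hz := hf.hasDerivAt.comp θ (he.mul_const (t : ℂ))
  exact (he.mul hz).congr_deriv (by simp only [Function.comp_apply]; ring)

lemma hasDerivAt_ray_radius (hf : DifferentiableAt ℂ f (cexp (θ * I) * t)) :
    HasDerivAt (fun s : ℝ => I * s * (cexp (θ * I) * f (cexp (θ * I) * s)))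
      (I * cexp (θ * I) * (f (cexp (θ * I) * t) +
        cexp (θ * I) * t * deriv f (cexp (θ * I) * t))) t := by
  have hs : HasDerivAt (fun s : ℝ => (s : ℂ)) 1 t := (hasDerivAt_id t).ofReal_comp
  have hz := hf.hasDerivAt.comp t (hs.const_mul (cexp (θ * I)))
  exact ((hs.const_mul I).mul (hz.const_mul (cexp (θ * I)))).congr_deriv
    (by simp only [Function.comp_apply]; ring)

variable {a b : ℝ} {g : ℝ → ℝ}

lemma continuous_comp_ray (hf : ∀ t : ℝ, DifferentiableAt ℂ f (cexp (θ * I) * t)) :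
    Continuous fun t : ℝ => f (cexp (θ * I) * t) :=
  continuous_iff_continuousAt.2 fun t =>
    (hf t).continuousAt.comp (f := fun s : ℝ => cexp (θ * I) * s) (by fun_prop)

lemma aestronglyMeasurable_ray_angle_deriv
    (hf : ∀ t : ℝ, DifferentiableAt ℂ f (cexp (θ * I) * t)) :
    AEStronglyMeasurable (fun t : ℝ => I * cexp (θ * I) * (f (cexp (θ * I) * t) +
      cexp (θ * I) * t * deriv f (cexp (θ * I) * t))) volume := by
  have hderiv : Measurable fun t : ℝ => deriv f (cexp (θ * I) * t) :=
    (measurable_deriv f).comp (by fun_prop)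
  exact (aestronglyMeasurable_const.mul ((continuous_comp_ray hf).aestronglyMeasurable.add
    ((Continuous.aestronglyMeasurable (by fun_prop)).mul hderiv.aestronglyMeasurable)))

lemma norm_ray_deriv_le (t : ℝ) (h : (1 + |t|) * (‖f (cexp (θ * I) * t)‖ +
      ‖deriv f (cexp (θ * I) * t)‖) ≤ g t) :
    ‖I * cexp (θ * I) * (f (cexp (θ * I) * t) +
      cexp (θ * I) * t * deriv f (cexp (θ * I) * t))‖ ≤ g t := by
  have hnorm : ‖cexp (θ * I)‖ = 1 := norm_exp_ofReal_mul_I θ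
  refine le_trans ?_ h
  rw [norm_mul, norm_mul, norm_I, hnorm, one_mul, one_mul]
  refine (norm_add_le _ _).trans ?_
  rw [norm_mul, norm_mul, hnorm, one_mul, norm_real, Real.norm_eq_abs]
  nlinarith [abs_nonneg t, norm_nonneg (f (cexp (θ * I) * t)),
    norm_nonneg (deriv f (cexp (θ * I) * t))]

lemma integral_ray_angle_deriv_eq_zero (hg : Integrable g)
    (hf : ∀ t : ℝ, DifferentiableAt ℂ f (cexp (θ * I) * t))
    (hbound : ∀ t : ℝ, (1 + |t|) * (‖f (cexp (θ * I) * t)‖ +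
      ‖deriv f (cexp (θ * I) * t)‖) ≤ g t) :
    ∫ t : ℝ, I * cexp (θ * I) * (f (cexp (θ * I) * t) +
      cexp (θ * I) * t * deriv f (cexp (θ * I) * t)) = 0 := by
  refine integral_eq_zero_of_hasDerivAt_of_integrable (fun t => hasDerivAt_ray_radius (hf t))
    (hg.mono' (aestronglyMeasurable_ray_angle_deriv hf)
      (ae_of_all _ fun t => norm_ray_deriv_le t (hbound t)))
    (hg.mono' (((continuous_const.mul continuous_ofReal).mul
      (continuous_const.mul (continuous_comp_ray hf))).aestronglyMeasurable)
      (ae_of_all _ fun t => ?_))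
  rw [norm_mul, norm_mul, norm_mul, norm_I, norm_exp_ofReal_mul_I, norm_real, Real.norm_eq_abs]
  nlinarith [hbound t, abs_nonneg t, norm_nonneg (f (cexp (θ * I) * t)),
    norm_nonneg (deriv f (cexp (θ * I) * t))]

theorem integral_rotate_ray_eq (hab : a ≤ b) (hg : Integrable g)
    (hf : ∀ θ ∈ Icc a b, ∀ t : ℝ, DifferentiableAt ℂ f (cexp (θ * I) * t))
    (hbound : ∀ θ ∈ Icc a b, ∀ t : ℝ, (1 + |t|) * (‖f (cexp (θ * I) * t)‖ +
      ‖deriv f (cexp (θ * I) * t)‖) ≤ g t) :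
    ∫ t : ℝ, cexp (b * I) * f (cexp (b * I) * t) =
      ∫ t : ℝ, cexp (a * I) * f (cexp (a * I) * t) := by
  set F : ℝ → ℂ := fun θ => ∫ t : ℝ, cexp (θ * I) * f (cexp (θ * I) * t)
  have hcont : ∀ θ ∈ Icc a b, Continuous fun t : ℝ => cexp (θ * I) * f (cexp (θ * I) * t) :=
    fun θ hθ => continuous_const.mul (continuous_comp_ray (hf θ hθ))
  have hle : ∀ θ ∈ Icc a b, ∀ t : ℝ, ‖cexp (θ * I) * f (cexp (θ * I) * t)‖ ≤ g t := by
    intro θ hθ t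
    rw [norm_mul, norm_exp_ofReal_mul_I, one_mul]
    nlinarith [hbound θ hθ t, abs_nonneg t, norm_nonneg (f (cexp (θ * I) * t)),
      norm_nonneg (deriv f (cexp (θ * I) * t))]
  have hFcont : ContinuousOn F (Icc a b) := by
    refine continuousOn_of_dominated (fun θ hθ => (hcont θ hθ).aestronglyMeasurable)
      (fun θ hθ => ae_of_all _ (hle θ hθ)) hg (ae_of_all _ fun t θ hθ => ?_)
    exact (ContinuousAt.mul (by fun_prop) ((hf θ hθ t).continuousAt.comp
      (f := fun φ : ℝ => cexp (φ * I) * t) (by fun_prop))).continuousWithinAt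
  have hFderiv : ∀ θ ∈ Ioo a b, HasDerivAt F 0 θ := by
    intro θ₀ hθ₀
    have hIcc : ∀ θ ∈ Ioo a b, θ ∈ Icc a b := fun θ hθ => Ioo_subset_Icc_self hθ
    obtain ⟨-, hderiv⟩ := hasDerivAt_integral_of_dominated_loc_of_deriv_le
      (F := fun (θ t : ℝ) => cexp (θ * I) * f (cexp (θ * I) * t)) (bound := g)
      (Ioo_mem_nhds hθ₀.1 hθ₀.2)
      (eventually_of_mem (Ioo_mem_nhds hθ₀.1 hθ₀.2) fun θ hθ =>
        (hcont θ (hIcc θ hθ)).aestronglyMeasurable)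
      ((hg.mono' (hcont θ₀ (hIcc θ₀ hθ₀)).aestronglyMeasurable
        (ae_of_all _ (hle θ₀ (hIcc θ₀ hθ₀)))))
      (aestronglyMeasurable_ray_angle_deriv (hf θ₀ (hIcc θ₀ hθ₀)))
      (ae_of_all _ fun t θ hθ => norm_ray_deriv_le t (hbound θ (hIcc θ hθ) t)) hg
      (ae_of_all _ fun t θ hθ => hasDerivAt_ray_angle (hf θ (hIcc θ hθ) t))
    rwa [integral_ray_angle_deriv_eq_zero hg (hf θ₀ (hIcc θ₀ hθ₀)) (hbound θ₀ (hIcc θ₀ hθ₀))]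
      at hderiv
  have := intervalIntegral.integral_eq_sub_of_hasDerivAt_of_le hab hFcont hFderiv
    intervalIntegrable_const
  simp only [intervalIntegral.integral_zero] at this
  exact sub_eq_zero.1 this.symm

end RayRotation

lemma Complex.normSq_cosh (w : ℂ) :
    normSq (cosh w) = Real.cosh w.re ^ 2 - Real.sin w.im ^ 2 := by
  conv_lhs => rw [← re_add_im w]
  rw [cosh_add, cosh_mul_I, sinh_mul_I, ← ofReal_cosh, ← ofReal_cos, ← ofReal_sinh, ← ofReal_sin,
    ← ofReal_mul, ← mul_assoc, ← ofReal_mul, normSq_add_mul_I]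
  nlinarith [Real.cosh_sq w.re, Real.sin_sq_add_cos_sq w.im]

lemma Complex.normSq_sinh (w : ℂ) :
    normSq (sinh w) = Real.sinh w.re ^ 2 + Real.sin w.im ^ 2 := by
  conv_lhs => rw [← re_add_im w]
  rw [sinh_add, cosh_mul_I, sinh_mul_I, ← ofReal_cosh, ← ofReal_cos, ← ofReal_sinh, ← ofReal_sin,
    ← ofReal_mul, ← mul_assoc, ← ofReal_mul, normSq_add_mul_I]
  nlinarith [Real.cosh_sq w.re, Real.sin_sq_add_cos_sq w.im]

lemma Complex.cosh_re_sq_le_two_mul_normSq_cosh {w : ℂ} (h : |w.im| ≤ |w.re|) :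
    Real.cosh w.re ^ 2 ≤ 2 * normSq (cosh w) := by
  have hsinh : w.im ^ 2 ≤ Real.sinh w.re ^ 2 := sq_le_sq.2 <| h.trans <| by
    rw [Real.abs_sinh]; exact Real.self_le_sinh_iff.2 (abs_nonneg _)
  rw [normSq_cosh]
  nlinarith [Real.cosh_sq w.re, Real.sin_sq_le_sq (x := w.im), Real.sin_sq_le_one w.im]

lemma Complex.normSq_sinh_le_cosh_re_sq (w : ℂ) : normSq (sinh w) ≤ Real.cosh w.re ^ 2 := by
  rw [normSq_sinh]
  nlinarith [Real.cosh_sq w.re, Real.sin_sq_le_one w.im]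

lemma Complex.one_le_two_mul_norm_cosh {w : ℂ} (h : |w.im| ≤ |w.re|) : 1 ≤ 2 * ‖cosh w‖ := by
  have := cosh_re_sq_le_two_mul_normSq_cosh h
  rw [← Complex.sq_norm] at this
  nlinarith [Real.one_le_cosh w.re, norm_nonneg (cosh w)]

lemma Complex.norm_sinh_le_two_mul_norm_cosh {w : ℂ} (h : |w.im| ≤ |w.re|) :
    ‖sinh w‖ ≤ 2 * ‖cosh w‖ := by
  have := (normSq_sinh_le_cosh_re_sq w).trans (cosh_re_sq_le_two_mul_normSq_cosh h)
  rw [← Complex.sq_norm, ← Complex.sq_norm] at this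
  nlinarith [norm_nonneg (cosh w), norm_nonneg (sinh w)]

lemma Complex.cosh_ne_zero_of_abs_im_le_abs_re {w : ℂ} (h : |w.im| ≤ |w.re|) : cosh w ≠ 0 := by
  intro h0
  have := one_le_two_mul_norm_cosh h
  rw [h0, norm_zero] at this
  norm_num at this

section Ray

lemma norm_ray (θ t : ℝ) : ‖cexp (θ * I) * t‖ = |t| := by
  rw [norm_mul, norm_exp_ofReal_mul_I, one_mul, norm_real, Real.norm_eq_abs]

variable {θ : ℝ}

lemma Real.sin_le_cos_of_mem_Icc (hθ : θ ∈ Icc 0 (π / 4)) : Real.sin θ ≤ Real.cos θ := by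
  rw [← Real.sin_pi_div_two_sub]
  exact Real.sin_le_sin_of_le_of_le_pi_div_two (by linarith [hθ.1, Real.pi_pos])
    (by linarith [hθ.1]) (by linarith [hθ.2])

lemma abs_im_le_abs_re_ray (hθ : θ ∈ Icc 0 (π / 4)) (t : ℝ) :
    |(cexp (θ * I) * t).im| ≤ |(cexp (θ * I) * t).re| := by
  simp only [mul_re, mul_im, exp_ofReal_mul_I_re, exp_ofReal_mul_I_im, ofReal_re, ofReal_im,
    mul_zero, sub_zero, zero_add, abs_mul]
  have hsin : 0 ≤ Real.sin θ :=
    Real.sin_nonneg_of_nonneg_of_le_pi hθ.1 (by linarith [hθ.2, Real.pi_pos])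
  rw [abs_of_nonneg hsin, abs_of_nonneg (hsin.trans (Real.sin_le_cos_of_mem_Icc hθ))]
  exact mul_le_mul_of_nonneg_right (Real.sin_le_cos_of_mem_Icc hθ) (abs_nonneg t)

lemma re_I_mul_mul_ray_sq_le {τ : ℂ} {m : ℝ} (hm : 0 ≤ m) (hre : m ≤ τ.re) (him : m ≤ τ.im)
    (hθ : θ ∈ Icc 0 (π / 4)) (t : ℝ) :
    (I * τ * (cexp (θ * I) * t) ^ 2).re ≤ -m * t ^ 2 := by
  have hsin : 0 ≤ Real.sin θ :=
    Real.sin_nonneg_of_nonneg_of_le_pi hθ.1 (by linarith [hθ.2, Real.pi_pos])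
  have hsc := Real.sin_le_cos_of_mem_Icc hθ
  have hc : 0 ≤ Real.cos θ := hsin.trans hsc
  have hre_eq : (I * τ * (cexp (θ * I) * t) ^ 2).re = -(τ.im * (Real.cos θ ^ 2 - Real.sin θ ^ 2)
      + τ.re * (2 * Real.sin θ * Real.cos θ)) * t ^ 2 := by
    simp only [sq, mul_re, mul_im, exp_ofReal_mul_I_re, exp_ofReal_mul_I_im, ofReal_re,
      ofReal_im, I_re, I_im]
    ring
  have key :
      m ≤ τ.im * (Real.cos θ ^ 2 - Real.sin θ ^ 2) + τ.re * (2 * Real.sin θ * Real.cos θ) := by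
    nlinarith [Real.sin_sq_add_cos_sq θ, mul_nonneg hsin (sub_nonneg.2 hsc),
      mul_nonneg (sub_nonneg.2 him) (mul_nonneg (add_nonneg hc hsin) (sub_nonneg.2 hsc)),
      mul_nonneg (sub_nonneg.2 hre) (mul_nonneg hsin hc)]
  rw [hre_eq]
  nlinarith [mul_le_mul_of_nonneg_right key (sq_nonneg t)]

end Ray

lemma integrable_one_add_sq_mul_exp_neg_mul_sq {b : ℝ} (hb : 0 < b) :
    Integrable fun t : ℝ => (1 + t ^ 2) * rexp (-b * t ^ 2) := by
  simp_rw [add_mul, one_mul]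
  refine (integrable_exp_neg_mul_sq hb).add ?_
  simpa [Real.rpow_two] using integrable_rpow_mul_exp_neg_mul_sq hb (s := 2) (by norm_num)

section MordellKernel

variable {u τ y : ℂ}

def mordellKernel (u τ y : ℂ) : ℂ :=
  cexp (π * I * τ * y ^ 2 + π * y * (τ - 2 * u + 1)) / (2 * cosh (π * y))

lemma hasDerivAt_mordellKernel (hy : cosh (π * y) ≠ 0) :
    HasDerivAt (mordellKernel u τ) (mordellKernel u τ y *
      (2 * π * I * τ * y + π * (τ - 2 * u + 1) - π * sinh (π * y) / cosh (π * y))) y := by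
  have hexponent : HasDerivAt (fun y : ℂ => π * I * τ * y ^ 2 + π * y * (τ - 2 * u + 1))
      (2 * π * I * τ * y + π * (τ - 2 * u + 1)) y := by
    have := ((hasDerivAt_pow 2 y).const_mul (π * I * τ)).add
      (((hasDerivAt_id y).const_mul (π : ℂ)).mul_const (τ - 2 * u + 1))
    exact this.congr_deriv (by ring)
  have hcosh : HasDerivAt (fun y : ℂ => 2 * cosh (π * y)) (2 * (sinh (π * y) * π)) y :=
    ((Complex.hasDerivAt_cosh _).comp y ((hasDerivAt_id y).const_mul (π : ℂ))
      |>.congr_deriv (by rw [id]; ring)).const_mul 2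
  refine (hexponent.cexp.div hcosh (mul_ne_zero two_ne_zero hy)).congr_deriv ?_
  simp only [mordellKernel]
  field_simp

lemma mordellKernel_ofReal (y : ℝ) :
    mordellKernel u τ y = cexp (π * I * τ * (y : ℂ) ^ 2 + π * (y : ℂ) * (τ - 2 * u + 1)) /
      ((rexp (π * y) + rexp (-(π * y)) : ℝ) : ℂ) := by
  rw [mordellKernel, two_cosh]
  push_cast
  ring_nf

lemma abs_im_le_abs_re_pi_mul (hy : |y.im| ≤ |y.re|) : |(π * y).im| ≤ |(π * y).re| := by
  rw [im_ofReal_mul, re_ofReal_mul, abs_mul, abs_mul]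
  exact mul_le_mul_of_nonneg_left hy (abs_nonneg _)

lemma norm_mordellKernel_le (hy : |y.im| ≤ |y.re|) :
    ‖mordellKernel u τ y‖ ≤ rexp (π * I * τ * y ^ 2 + π * y * (τ - 2 * u + 1)).re := by
  rw [mordellKernel, norm_div, norm_exp, norm_mul, Complex.norm_two]
  exact div_le_self (exp_pos _).le (one_le_two_mul_norm_cosh (abs_im_le_abs_re_pi_mul hy))

lemma norm_deriv_mordellKernel_le (hy : |y.im| ≤ |y.re|) :
    ‖deriv (mordellKernel u τ) y‖ ≤
      ‖mordellKernel u τ y‖ * (2 * π * ‖τ‖ * ‖y‖ + π * ‖τ - 2 * u + 1‖ + 2 * π) := by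
  have hcosh0 := cosh_ne_zero_of_abs_im_le_abs_re (abs_im_le_abs_re_pi_mul hy)
  have htanh : ‖π * sinh (π * y) / cosh (π * y)‖ ≤ 2 * π := by
    rw [norm_div, norm_mul, norm_real, Real.norm_of_nonneg Real.pi_pos.le,
      div_le_iff₀ (norm_pos_iff.2 hcosh0)]
    nlinarith [norm_sinh_le_two_mul_norm_cosh (abs_im_le_abs_re_pi_mul hy), Real.pi_pos]
  have hlin : ‖2 * π * I * τ * y + π * (τ - 2 * u + 1)‖ ≤
      2 * π * ‖τ‖ * ‖y‖ + π * ‖τ - 2 * u + 1‖ := by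
    refine (norm_add_le _ _).trans_eq ?_
    simp only [norm_mul, norm_real, norm_I, Complex.norm_two, Real.norm_of_nonneg Real.pi_pos.le]
    ring
  rw [(hasDerivAt_mordellKernel hcosh0).deriv, norm_mul]
  gcongr
  exact (norm_sub_le _ _).trans (add_le_add hlin htanh)

variable {θ m : ℝ}

lemma norm_mordellKernel_ray_le (hm : 0 < m) (hre : m ≤ τ.re) (him : m ≤ τ.im)
    (hθ : θ ∈ Icc 0 (π / 4)) (t : ℝ) :
    ‖mordellKernel u τ (cexp (θ * I) * t)‖ ≤
      rexp (π * ‖τ - 2 * u + 1‖ ^ 2 / (2 * m)) * rexp (-(π * m / 2) * t ^ 2) := by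
  refine (norm_mordellKernel_le (abs_im_le_abs_re_ray hθ t)).trans ?_
  rw [← Real.exp_add]
  refine Real.exp_le_exp.2 ?_
  set z := cexp (θ * I) * t
  set c := τ - 2 * u + 1
  have hsplit : (π * I * τ * z ^ 2 + π * z * c).re = π * ((I * τ * z ^ 2).re + (z * c).re) := by
    rw [show (π : ℂ) * I * τ * z ^ 2 + π * z * c = π * (I * τ * z ^ 2 + z * c) by ring,
      re_ofReal_mul, add_re]
  have hquad : (I * τ * z ^ 2).re ≤ -m * t ^ 2 := re_I_mul_mul_ray_sq_le hm.le hre him hθ t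
  have hlin : (z * c).re ≤ |t| * ‖c‖ := (re_le_norm _).trans_eq (by rw [norm_mul, norm_ray])
  have hamgm : |t| * ‖c‖ ≤ ‖c‖ ^ 2 / (2 * m) + m / 2 * t ^ 2 := by
    rw [div_add' _ _ _ (by positivity), le_div_iff₀ (by positivity), ← sq_abs t]
    nlinarith [sq_nonneg (‖c‖ - m * |t|)]
  rw [hsplit]
  have := mul_le_mul_of_nonneg_left (add_le_add hquad (hlin.trans hamgm)) Real.pi_pos.le
  linear_combination this

lemma mordellKernel_ray_bound (hm : 0 < m) (hre : m ≤ τ.re) (him : m ≤ τ.im)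
    (hθ : θ ∈ Icc 0 (π / 4)) (t : ℝ) :
    (1 + |t|) * (‖mordellKernel u τ (cexp (θ * I) * t)‖ +
        ‖deriv (mordellKernel u τ) (cexp (θ * I) * t)‖) ≤
      2 * (1 + 2 * π * ‖τ‖ + π * ‖τ - 2 * u + 1‖ + 2 * π) *
        rexp (π * ‖τ - 2 * u + 1‖ ^ 2 / (2 * m)) * ((1 + t ^ 2) * rexp (-(π * m / 2) * t ^ 2)) := by
  set K := ‖mordellKernel u τ (cexp (θ * I) * t)‖
  set L := 1 + 2 * π * ‖τ‖ + π * ‖τ - 2 * u + 1‖ + 2 * π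
  have hderiv := norm_deriv_mordellKernel_le (u := u) (τ := τ) (abs_im_le_abs_re_ray hθ t)
  rw [norm_ray] at hderiv
  have hfactor : 1 + (2 * π * ‖τ‖ * |t| + π * ‖τ - 2 * u + 1‖ + 2 * π) ≤ L * (1 + |t|) := by
    have h0 : 0 ≤ 2 * π * ‖τ‖ + (1 + π * ‖τ - 2 * u + 1‖ + 2 * π) * |t| := by positivity
    linear_combination h0
  have hsum : K + ‖deriv (mordellKernel u τ) (cexp (θ * I) * t)‖ ≤ L * (1 + |t|) * K := by
    nlinarith [mul_le_mul_of_nonneg_right hfactor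
      (norm_nonneg (mordellKernel u τ (cexp (θ * I) * t)))]
  have hK := norm_mordellKernel_ray_le (u := u) hm hre him hθ t
  have hL : 0 ≤ L := by positivity
  calc (1 + |t|) * (K + ‖deriv (mordellKernel u τ) (cexp (θ * I) * t)‖)
      ≤ (1 + |t|) * (L * (1 + |t|) * K) := by gcongr
    _ = L * (1 + |t|) ^ 2 * K := by ring
    _ ≤ L * (2 * (1 + t ^ 2)) * (rexp (π * ‖τ - 2 * u + 1‖ ^ 2 / (2 * m)) *
        rexp (-(π * m / 2) * t ^ 2)) := by
      gcongr
      nlinarith [sq_abs t, sq_nonneg (|t| - 1)]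
    _ = _ := by ring

lemma integral_mordellKernel_rotate (h1 : 0 < τ.re) (h2 : 0 < τ.im) :
    ∫ t : ℝ, cexp (↑(π / 4) * I) * mordellKernel u τ (cexp (↑(π / 4) * I) * t) =
      ∫ t : ℝ, mordellKernel u τ t := by
  have hm : 0 < min τ.re τ.im := lt_min h1 h2
  have hrot := integral_rotate_ray_eq (f := mordellKernel u τ) (a := 0) (b := π / 4)
    (by positivity) ((integrable_one_add_sq_mul_exp_neg_mul_sq (by positivity)).const_mul _)
    (fun θ hθ t => (hasDerivAt_mordellKernel (cosh_ne_zero_of_abs_im_le_abs_re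
      (abs_im_le_abs_re_pi_mul (abs_im_le_abs_re_ray hθ t)))).differentiableAt)
    (fun θ hθ t => mordellKernel_ray_bound hm (min_le_left _ _) (min_le_right _ _) hθ t)
  simpa using hrot

end MordellKernel

lemma upsilon_integrand_eq (u τ : ℂ) (v : ℝ) :
    cexp (3 * π * I / 4) *
      (cexp (-π * I * τ * (1 / 2 + cexp (3 * π * I / 4) * v) ^ 2
          + 2 * π * I * u * (1 / 2 + cexp (3 * π * I / 4) * v)) /
        (cexp (2 * π * I * (1 / 2 + cexp (3 * π * I / 4) * v)) - 1)) =
      cexp (π * I * (u - 1 / 2 - τ / 4)) *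
        (cexp (↑(π / 4) * I) * mordellKernel u τ (cexp (↑(π / 4) * I) * v)) := by
  set w := cexp (↑(π / 4) * I)
  set y := w * v
  have hω : cexp (3 * π * I / 4) = I * w := by
    rw [show (3 : ℂ) * π * I / 4 = π / 2 * I + ↑(π / 4) * I by push_cast; ring, Complex.exp_add,
      Complex.exp_pi_div_two_mul_I]
  have hz : 1 / 2 + I * w * v = 1 / 2 + I * y := by ring
  have hcosh : cosh (π * y) ≠ 0 := cosh_ne_zero_of_abs_im_le_abs_re
    (abs_im_le_abs_re_pi_mul (abs_im_le_abs_re_ray ⟨by positivity, le_rfl⟩ v))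
  have hnum : cexp (-π * I * τ * (1 / 2 + I * y) ^ 2 + 2 * π * I * u * (1 / 2 + I * y)) =
      cexp (π * I * τ * y ^ 2 + π * y * (τ - 2 * u + 1)) * cexp (-(π * y)) *
        cexp (π * I * (u - τ / 4)) := by
    rw [← Complex.exp_add, ← Complex.exp_add]
    congr 1
    linear_combination (-π * τ * y - π * I * τ * y ^ 2 + 2 * π * u * y) * I_sq
  have hden : cexp (2 * π * I * (1 / 2 + I * y)) - 1 = -(2 * cosh (π * y)) * cexp (-(π * y)) := by
    have hexp : 2 * π * I * (1 / 2 + I * y) = π * I + -(π * y) + -(π * y) := by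
      linear_combination (2 * π * y) * I_sq
    have hinv : cexp (π * y) * cexp (-(π * y)) = 1 := by
      rw [← Complex.exp_add, add_neg_cancel, Complex.exp_zero]
    rw [hexp, Complex.exp_add, Complex.exp_add, exp_pi_mul_I, two_cosh]
    linear_combination hinv
  have hphase : cexp (π * I * (u - 1 / 2 - τ / 4)) = cexp (π * I * (u - τ / 4)) * -I := by
    rw [show (π : ℂ) * I * (u - 1 / 2 - τ / 4) = π * I * (u - τ / 4) + -(π / 2 * I) by ring,
      Complex.exp_add, Complex.exp_neg, Complex.exp_pi_div_two_mul_I, inv_I]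
  rw [hω, hz, hnum, hden, hphase, mordellKernel]
  field_simp

theorem statement10_general (u τ : ℂ) (h1 : 0 < τ.re) (h2 : 0 < τ.im) :
    Upsilon u τ = Complex.exp ((π:ℂ)*I*(u - 1/2 - τ/4)) *
      ∫ y : ℝ, Complex.exp ((π:ℂ)*I*τ*(y:ℂ)^2 + (π:ℂ)*(y:ℂ)*(τ - 2*u + 1)) /
        ((Real.exp (π*y) + Real.exp (-(π*y)) : ℝ) : ℂ) := by
  calc Upsilon u τ = ∫ v : ℝ, cexp (π * I * (u - 1 / 2 - τ / 4)) *
        (cexp (↑(π / 4) * I) * mordellKernel u τ (cexp (↑(π / 4) * I) * v)) :=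
      integral_congr_ae (ae_of_all _ (upsilon_integrand_eq u τ))
    _ = cexp (π * I * (u - 1 / 2 - τ / 4)) * ∫ t : ℝ, mordellKernel u τ t := by
      rw [integral_const_mul, integral_mordellKernel_rotate h1 h2]
    _ = _ := by simp_rw [mordellKernel_ofReal]

theorem statement10 (u τ : ℂ) (h1 : 0 < τ.re) (h2 : 0 < τ.im)
    (h3 : (τ.re - τ.im)/2 < u.re) (h4 : u.re < 1 + (τ.re - τ.im)/2) :
    Upsilon u τ = Complex.exp ((π:ℂ)*I*(u - 1/2 - τ/4)) *
      ∫ y : ℝ, Complex.exp ((π:ℂ)*I*τ*(y:ℂ)^2 + (π:ℂ)*(y:ℂ)*(τ - 2*u + 1)) /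
        ((Real.exp (π*y) + Real.exp (-(π*y)) : ℝ) : ℂ) :=
  statement10_general u τ h1 h2

end
end

section
/- Let τ ∈ ℂ with Re(τ) > 0 be fixed and let m ∈ ℤ_{≥0}. The functions u ↦ G(u;τ), u ↦ G^{(1)}(u;τ), …, u ↦ G^{(m)}(u;τ) are linearly independent over ℂ: if c_0, …, c_m ∈ ℂ satisfy Σ_{j=0}^m c_j·G^{(j)}(u;τ) = 0 for all u ∈ ℂ, then c_0 = c_1 = ⋯ = c_m = 0. In particular (m = 0), for each such τ the function G(·;τ) is not identically zero. -/
open Complex Real MeasureTheory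

noncomputable section

/-! If a nontrivial combination `∑ c_j G^{(j)}` vanishes, then `G` solves a linear ODE with
constant coefficients, and Gronwall's inequality along rays bounds `|G u|` by `C e^{K |u|}`.
On the other hand, along `u = √τ (1/2 + e^{3πi/4} t)` completing the square in the Mordell
integral gives `|G u| = |τ^{1/4}| e^{π Re τ t² / 2 + O(t)} |J(t)|`, where
`J(t) = ∫ e^{-πτ (v - t)²} / (e^{2πi (1/2 + e^{3πi/4} v)} - 1) dv` tends to `-∫ e^{-πτ s²} ≠ 0`
as `t → ∞`, because the denominator has modulus at least `1/2` and tends to `-1`. This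
Gaussian growth contradicts the exponential bound. -/

open Filter Topology Finset

theorem norm_le_norm_mul_exp_of_norm_deriv_le {E : Type*} [NormedAddCommGroup E]
    [NormedSpace ℂ E] {f : ℂ → E} {K : ℝ} (hf : Differentiable ℂ f)
    (hK : ∀ z, ‖deriv f z‖ ≤ K * ‖f z‖) (u : ℂ) :
    ‖f u‖ ≤ ‖f 0‖ * Real.exp (K * ‖u‖) := by
  have hray : ∀ t : ℝ, HasDerivAt (fun t : ℝ => f (t * u)) (u • deriv f (t * u)) t := fun t =>
    (hf _).hasDerivAt.scomp t (by simpa using (hasDerivAt_id t).ofReal_comp.mul_const u)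
  have := norm_le_gronwallBound_of_norm_deriv_right_le (a := 0) (b := 1) (ε := 0)
    (δ := ‖f 0‖) (K := K * ‖u‖) (fun t _ => (hray t).continuousAt.continuousWithinAt)
    (fun t _ => (hray t).hasDerivWithinAt) (by simp) (fun t _ => ?_) 1 (by simp)
  · simpa [gronwallBound_ε0] using this
  · rw [norm_smul, add_zero, mul_comm K, mul_assoc]
    exact mul_le_mul_of_nonneg_left (hK _) (norm_nonneg u)

def jet (n : ℕ) (f : ℂ → ℂ) (z : ℂ) : Fin n → ℂ := fun i => iteratedDeriv i f z

theorem hasDerivAt_jet {n : ℕ} {f : ℂ → ℂ} (hf : Differentiable ℂ f) (z : ℂ) :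
    HasDerivAt (jet n f) (fun i => iteratedDeriv (i + 1) f z) z := by
  refine hasDerivAt_pi.2 fun i => ?_
  rw [iteratedDeriv_succ]
  exact (hf.contDiff.differentiable_iteratedDeriv (n := ⊤) i (by simp) z).hasDerivAt

theorem norm_deriv_jet_le {n : ℕ} {f : ℂ → ℂ} (hf : Differentiable ℂ f) {a : ℕ → ℂ}
    (hode : ∀ z, iteratedDeriv n f z = ∑ j ∈ range n, a j * iteratedDeriv j f z) (z : ℂ) :
    ‖deriv (jet n f) z‖ ≤ (1 + ∑ j ∈ range n, ‖a j‖) * ‖jet n f z‖ := by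
  have hcomp : ∀ j (hj : j < n), ‖iteratedDeriv j f z‖ ≤ ‖jet n f z‖ := fun j hj =>
    norm_le_pi_norm (jet n f z) ⟨j, hj⟩
  have hsum : 0 ≤ ∑ j ∈ range n, ‖a j‖ := sum_nonneg fun _ _ => norm_nonneg _
  rw [(hasDerivAt_jet hf z).deriv, pi_norm_le_iff_of_nonneg (by positivity)]
  intro i
  rcases (Nat.succ_le_of_lt i.isLt).lt_or_eq with hi | hi
  · exact (hcomp _ hi).trans (le_mul_of_one_le_left (norm_nonneg _) (by linarith))
  · calc ‖iteratedDeriv (i + 1) f z‖ = ‖∑ j ∈ range n, a j * iteratedDeriv j f z‖ := by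
          rw [← hode]; exact congrArg (fun k => ‖iteratedDeriv k f z‖) hi
      _ ≤ ∑ j ∈ range n, ‖a j‖ * ‖jet n f z‖ := by
          refine (norm_sum_le _ _).trans (sum_le_sum fun j hj => ?_)
          rw [norm_mul]
          exact mul_le_mul_of_nonneg_left (hcomp j (mem_range.1 hj)) (norm_nonneg _)
      _ ≤ (1 + ∑ j ∈ range n, ‖a j‖) * ‖jet n f z‖ := by
          rw [← sum_mul]
          exact mul_le_mul_of_nonneg_right (by linarith) (norm_nonneg _)

theorem exists_norm_le_mul_exp_of_linearODE {f : ℂ → ℂ} (hf : Differentiable ℂ f) {n : ℕ}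
    {c : ℕ → ℂ} (hn : c n ≠ 0) (h : ∀ u, ∑ j ∈ range (n + 1), c j * iteratedDeriv j f u = 0) :
    ∃ C K : ℝ, ∀ u, ‖f u‖ ≤ C * Real.exp (K * ‖u‖) := by
  rcases n with _ | k
  · exact ⟨0, 0, fun u => by simpa [hn] using h u⟩
  · have hode : ∀ z, iteratedDeriv (k + 1) f z =
        ∑ j ∈ range (k + 1), -(c j / c (k + 1)) * iteratedDeriv j f z := by
      intro z
      have := h z
      rw [sum_range_succ] at this
      simp only [neg_mul, sum_neg_distrib, div_mul_eq_mul_div, ← sum_div]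
      field_simp
      linear_combination this
    refine ⟨‖jet (k + 1) f 0‖, 1 + ∑ j ∈ range (k + 1), ‖-(c j / c (k + 1))‖, fun u => ?_⟩
    calc ‖f u‖ = ‖jet (k + 1) f u 0‖ := by simp [jet]
      _ ≤ ‖jet (k + 1) f u‖ := norm_le_pi_norm _ _
      _ ≤ _ := norm_le_norm_mul_exp_of_norm_deriv_le
          (fun z => (hasDerivAt_jet hf z).differentiableAt) (norm_deriv_jet_le hf hode) u

def mordellDir : ℂ := Complex.exp (3 * (π:ℂ) * I / 4)

def mordellPath (v : ℝ) : ℂ := 1/2 + mordellDir * v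

theorem mordellDir_eq : mordellDir = (√2 / 2 : ℝ) * (-1 + I) := by
  have h : 3 * (π:ℂ) * I / 4 = ((π - π / 4 : ℝ) : ℂ) * I := by push_cast; ring
  rw [mordellDir, h, Complex.exp_mul_I, ← Complex.ofReal_cos, ← Complex.ofReal_sin,
    Real.cos_pi_sub, Real.sin_pi_sub, Real.cos_pi_div_four, Real.sin_pi_div_four]
  push_cast
  ring

theorem mordellDir_sq : mordellDir ^ 2 = -I := by
  have h2 : ((√2 : ℝ) : ℂ) ^ 2 = 2 := by norm_cast; simp
  rw [mordellDir_eq]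
  push_cast
  linear_combination (-I / 2) * h2 + ((√2 : ℂ) ^ 2 / 4) * Complex.I_sq

theorem norm_mordellDir : ‖mordellDir‖ = 1 := by
  simp [mordellDir, Complex.norm_exp]

theorem norm_mordellPath_le (v : ℝ) : ‖mordellPath v‖ ≤ 1/2 + |v| := by
  refine (norm_add_le _ _).trans ?_
  simp [norm_mordellDir]

theorem mordellPath_sq (v : ℝ) : mordellPath v ^ 2 = 1/4 + mordellDir * v - I * v ^ 2 := by
  rw [mordellPath]
  linear_combination (v : ℂ) ^ 2 * mordellDir_sq

theorem exp_two_pi_I_mul_mordellPath (v : ℝ) :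
    Complex.exp (2 * π * I * mordellPath v) = -Complex.exp ((-(√2 * π * v) : ℝ) * (1 + I)) := by
  have h : 2 * π * I * mordellPath v = π * I + ((-(√2 * π * v) : ℝ) : ℂ) * (1 + I) := by
    rw [mordellPath, mordellDir_eq]
    push_cast
    linear_combination (√2 * π * v : ℂ) * Complex.I_sq
  rw [h, Complex.exp_add, Complex.exp_pi_mul_I, neg_one_mul]

theorem norm_exp_two_pi_I_mul_mordellPath (v : ℝ) :
    ‖Complex.exp (2 * π * I * mordellPath v)‖ = Real.exp (-(√2 * π * v)) := by
  simp [exp_two_pi_I_mul_mordellPath, Complex.norm_exp]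

theorem one_half_le_norm_one_add_exp_mul_one_add_I (x : ℝ) :
    1/2 ≤ ‖1 + Complex.exp (x * (1 + I))‖ := by
  have hnorm : ‖Complex.exp (x * (1 + I))‖ = Real.exp x := by simp [Complex.norm_exp]
  rcases le_or_gt x (-1) with hx | hx
  · have : Real.exp x ≤ 1/2 := (Real.exp_le_exp.2 hx).trans <| by
      rw [Real.exp_neg, inv_le_comm₀ (Real.exp_pos 1) (by norm_num)]
      linarith [Real.add_one_le_exp 1]
    have := norm_sub_norm_le (1 : ℂ) (-Complex.exp (x * (1 + I)))
    simp only [norm_one, norm_neg, hnorm, sub_neg_eq_add] at this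
    linarith
  rcases le_or_gt x 1 with hx' | hx'
  · have hre : (1 + Complex.exp (x * (1 + I))).re = 1 + Real.exp x * Real.cos x := by
      simp [Complex.exp_re]
    have hcos : 0 ≤ Real.cos x :=
      Real.cos_nonneg_of_mem_Icc ⟨by linarith [Real.pi_gt_three], by linarith [Real.pi_gt_three]⟩
    have := Complex.re_le_norm (1 + Complex.exp (x * (1 + I)))
    nlinarith [Real.exp_pos x]
  · have : 2 ≤ Real.exp x := by linarith [Real.add_one_le_exp x]
    have := norm_sub_norm_le (Complex.exp (x * (1 + I))) (-1)
    rw [norm_neg, norm_one, hnorm, sub_neg_eq_add, add_comm] at this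
    linarith

theorem one_half_le_norm_exp_mordellPath_sub_one (v : ℝ) :
    1/2 ≤ ‖Complex.exp (2 * π * I * mordellPath v) - 1‖ := by
  rw [exp_two_pi_I_mul_mordellPath, ← norm_neg, neg_sub, sub_neg_eq_add]
  exact one_half_le_norm_one_add_exp_mul_one_add_I _

theorem exp_mordellPath_sub_one_ne_zero (v : ℝ) :
    Complex.exp (2 * π * I * mordellPath v) - 1 ≠ 0 := fun h => by
  have := one_half_le_norm_exp_mordellPath_sub_one v
  rw [h, norm_zero] at this
  norm_num at this

theorem continuous_mordellPath : Continuous mordellPath := by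
  unfold mordellPath; fun_prop

def mordellIntegrand (τ u : ℂ) (v : ℝ) : ℂ :=
  mordellDir * (Complex.exp (-π * I * τ * mordellPath v ^ 2 + 2 * π * I * u * mordellPath v) /
    (Complex.exp (2 * π * I * mordellPath v) - 1))

theorem upsilon_eq_integral_mordellIntegrand (u τ : ℂ) :
    Upsilon u τ = ∫ v : ℝ, mordellIntegrand τ u v := rfl

theorem continuous_mordellIntegrand (τ u : ℂ) : Continuous (mordellIntegrand τ u) := by
  have := continuous_mordellPath
  have := exp_mordellPath_sub_one_ne_zero
  unfold mordellIntegrand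
  fun_prop (disch := assumption)

theorem hasDerivAt_mordellIntegrand (τ : ℂ) (v : ℝ) (u : ℂ) :
    HasDerivAt (fun u => mordellIntegrand τ u v)
      (2 * π * I * mordellPath v * mordellIntegrand τ u v) u := by
  have hexp : HasDerivAt (fun u => -π * I * τ * mordellPath v ^ 2 + 2 * π * I * u * mordellPath v)
      (2 * π * I * mordellPath v) u := by
    simpa [mul_comm] using ((hasDerivAt_id u).const_mul (2 * π * I)).mul_const
      (mordellPath v) |>.const_add (-π * I * τ * mordellPath v ^ 2)
  refine ((hexp.cexp.div_const _).const_mul mordellDir).congr_deriv ?_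
  unfold mordellIntegrand
  ring

theorem norm_two_pi_I_mul_mordellPath_le (v : ℝ) :
    ‖2 * π * I * mordellPath v‖ ≤ 2 * π * (1 + |v|) := by
  simp only [norm_mul, Complex.norm_real, Real.norm_eq_abs, abs_of_pos Real.pi_pos,
    Complex.norm_I, mul_one, Complex.norm_ofNat]
  gcongr
  linarith [norm_mordellPath_le v]

theorem re_mordellExponent_le (τ u : ℂ) (v : ℝ) :
    (-π * I * τ * mordellPath v ^ 2 + 2 * π * I * u * mordellPath v).re ≤
      -(π * τ.re) * v ^ 2 + (π * ‖τ‖ + 2 * π * ‖u‖) * (1 + |v|) := by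
  have hsplit : -π * I * τ * mordellPath v ^ 2 + 2 * π * I * u * mordellPath v =
      ((-(π * v ^ 2) : ℝ) : ℂ) * τ + (-π * I * τ * (1/4 + mordellDir * v)
        + 2 * π * I * u * mordellPath v) := by
    rw [mordellPath_sq]; push_cast; linear_combination (π * τ * v ^ 2 : ℂ) * Complex.I_sq
  have h1 : ‖-π * I * τ * (1/4 + mordellDir * v)‖ ≤ π * ‖τ‖ * (1 + |v|) := by
    have : ‖(1/4 : ℂ) + mordellDir * v‖ ≤ 1 + |v| := by
      refine (norm_add_le _ _).trans ?_
      simp only [norm_mul, norm_mordellDir, Complex.norm_real, Real.norm_eq_abs]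
      norm_num
    simp only [norm_mul, norm_neg, Complex.norm_real, Real.norm_eq_abs, abs_of_pos Real.pi_pos,
      Complex.norm_I, mul_one]
    gcongr
  have h2 : ‖2 * π * I * u * mordellPath v‖ ≤ 2 * π * ‖u‖ * (1 + |v|) := by
    have := mul_le_mul_of_nonneg_left (norm_two_pi_I_mul_mordellPath_le v) (norm_nonneg u)
    rw [← norm_mul] at this
    calc ‖2 * π * I * u * mordellPath v‖ = ‖u * (2 * π * I * mordellPath v)‖ := by ring_nf
      _ ≤ _ := this
      _ = _ := by ring
  rw [hsplit, Complex.add_re, Complex.re_ofReal_mul]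
  have := (Complex.re_le_norm _).trans (norm_add_le (-π * I * τ * (1/4 + mordellDir * v))
    (2 * π * I * u * mordellPath v))
  nlinarith

theorem norm_mordellIntegrand_le (τ u : ℂ) (v : ℝ) :
    ‖mordellIntegrand τ u v‖ ≤
      2 * Real.exp (-(π * τ.re) * v ^ 2 + (π * ‖τ‖ + 2 * π * ‖u‖) * (1 + |v|)) := by
  have hden := one_half_le_norm_exp_mordellPath_sub_one v
  rw [mordellIntegrand, norm_mul, norm_mordellDir, one_mul, norm_div, Complex.norm_exp,
    div_le_iff₀ (by linarith)]
  have := Real.exp_le_exp.2 (re_mordellExponent_le τ u v)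
  nlinarith [Real.exp_pos (-π * I * τ * mordellPath v ^ 2 + 2 * π * I * u * mordellPath v).re]

theorem exists_one_add_abs_mul_exp_le (a b : ℝ) (ha : 0 < a) :
    ∃ C, ∀ v : ℝ, (1 + |v|) * Real.exp (-a * v ^ 2 + b * (1 + |v|)) ≤
      C * Real.exp (-(a / 2) * v ^ 2) := by
  refine ⟨Real.exp (b + (b + 1) ^ 2 / (2 * a)), fun v => ?_⟩
  have hamgm : (b + 1) * |v| ≤ a / 2 * v ^ 2 + (b + 1) ^ 2 / (2 * a) := by
    have : 0 ≤ (a * |v| - (b + 1)) ^ 2 / (2 * a) := by positivity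
    rw [← sq_abs v]
    field_simp at this ⊢
    nlinarith
  calc (1 + |v|) * Real.exp (-a * v ^ 2 + b * (1 + |v|))
      ≤ Real.exp |v| * Real.exp (-a * v ^ 2 + b * (1 + |v|)) := by
        gcongr; linarith [Real.add_one_le_exp |v|]
    _ ≤ Real.exp (b + (b + 1) ^ 2 / (2 * a)) * Real.exp (-(a / 2) * v ^ 2) := by
        rw [← Real.exp_add, ← Real.exp_add, Real.exp_le_exp]
        linarith

theorem exists_one_add_abs_mul_norm_mordellIntegrand_le {τ : ℂ} (hτ : 0 < τ.re) (R : ℝ) :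
    ∃ C, ∀ u : ℂ, ‖u‖ ≤ R → ∀ v : ℝ,
      (1 + |v|) * ‖mordellIntegrand τ u v‖ ≤ C * Real.exp (-(π * τ.re / 2) * v ^ 2) := by
  obtain ⟨C, hC⟩ := exists_one_add_abs_mul_exp_le (π * τ.re) (π * ‖τ‖ + 2 * π * R)
    (by positivity)
  refine ⟨2 * C, fun u hu v => ?_⟩
  calc (1 + |v|) * ‖mordellIntegrand τ u v‖
      ≤ (1 + |v|) * (2 * Real.exp (-(π * τ.re) * v ^ 2 + (π * ‖τ‖ + 2 * π * R) * (1 + |v|))) := by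
        gcongr
        refine (norm_mordellIntegrand_le τ u v).trans ?_
        gcongr
    _ ≤ 2 * C * Real.exp (-(π * τ.re / 2) * v ^ 2) := by
        have := hC v
        nlinarith

theorem differentiable_upsilon {τ : ℂ} (hτ : 0 < τ.re) :
    Differentiable ℂ (fun u => Upsilon u τ) := by
  intro u₀
  obtain ⟨C, hC⟩ := exists_one_add_abs_mul_norm_mordellIntegrand_le hτ (‖u₀‖ + 1)
  have hgauss : Integrable (fun v : ℝ => Real.exp (-(π * τ.re / 2) * v ^ 2)) :=
    integrable_exp_neg_mul_sq (by positivity)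
  have hF : Integrable (mordellIntegrand τ u₀) := by
    refine (hgauss.const_mul C).mono' (continuous_mordellIntegrand τ u₀).aestronglyMeasurable
      (ae_of_all _ fun v => ?_)
    exact (le_mul_of_one_le_left (norm_nonneg _) (by linarith [abs_nonneg v])).trans
      (hC u₀ (by linarith) v)
  have hF' : ∀ v, ∀ u ∈ Metric.ball u₀ 1,
      ‖2 * π * I * mordellPath v * mordellIntegrand τ u v‖ ≤
        2 * π * C * Real.exp (-(π * τ.re / 2) * v ^ 2) := by
    intro v u hu
    have hu : ‖u‖ ≤ ‖u₀‖ + 1 := by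
      have := norm_le_norm_add_norm_sub' u u₀
      rw [Metric.mem_ball, dist_eq_norm] at hu
      linarith
    rw [norm_mul, mul_assoc _ C]
    calc _ ≤ 2 * π * (1 + |v|) * ‖mordellIntegrand τ u v‖ := by
          gcongr; exact norm_two_pi_I_mul_mordellPath_le v
      _ ≤ _ := by rw [mul_assoc]; exact mul_le_mul_of_nonneg_left (hC u hu v) (by positivity)
  have := hasDerivAt_integral_of_dominated_loc_of_deriv_le (F := mordellIntegrand τ)
    (F' := fun u v => 2 * π * I * mordellPath v * mordellIntegrand τ u v)
    (bound := fun v => 2 * π * C * Real.exp (-(π * τ.re / 2) * v ^ 2))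
    (Metric.ball_mem_nhds u₀ one_pos)
    (Eventually.of_forall fun u => (continuous_mordellIntegrand τ u).aestronglyMeasurable) hF
    (by have := continuous_mordellPath; have := continuous_mordellIntegrand τ u₀
        exact Continuous.aestronglyMeasurable (by fun_prop))
    (ae_of_all _ hF') (hgauss.const_mul _)
    (ae_of_all _ fun v u _ => hasDerivAt_mordellIntegrand τ v u)
  simp only [upsilon_eq_integral_mordellIntegrand]
  exact this.2.differentiableAt

theorem differentiable_G {τ : ℂ} (hτ : 0 < τ.re) : Differentiable ℂ (fun u => G u τ) := by
  have := differentiable_upsilon hτ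
  unfold G
  fun_prop

def gaussianMordellIntegral (τ : ℂ) (t : ℝ) : ℂ :=
  ∫ v : ℝ, Complex.exp (-(π * τ) * ((v : ℂ) - t) ^ 2) /
    (Complex.exp (2 * π * I * mordellPath v) - 1)

theorem upsilon_mul_mordellPath (τ : ℂ) (t : ℝ) :
    Upsilon (τ * mordellPath t) τ =
      mordellDir * Complex.exp (π * I * τ * mordellPath t ^ 2) * gaussianMordellIntegral τ t := by
  -- complete the square: `mordellPath v - mordellPath t = mordellDir * (v - t)`,
  -- whose square is `-I * (v - t) ^ 2`
  have hexp : ∀ v : ℝ, -π * I * τ * mordellPath v ^ 2 + 2 * π * I * (τ * mordellPath t) *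
      mordellPath v = π * I * τ * mordellPath t ^ 2 + -(π * τ) * ((v : ℂ) - t) ^ 2 := by
    intro v
    simp only [mordellPath]
    linear_combination (-π * I * τ * ((v : ℂ) - t) ^ 2) * mordellDir_sq +
      (π * τ * ((v : ℂ) - t) ^ 2) * Complex.I_sq
  rw [upsilon_eq_integral_mordellIntegrand, gaussianMordellIntegral, mul_assoc,
    ← integral_const_mul, ← integral_const_mul]
  congr 1 with v
  rw [mordellIntegrand, hexp, Complex.exp_add]
  ring

theorem gaussian_integral_ne_zero {b : ℂ} (hb : 0 < b.re) :
    ∫ x : ℝ, Complex.exp (-b * (x : ℂ) ^ 2) ≠ 0 := by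
  have hb0 : b ≠ 0 := fun h => by simp [h] at hb
  rw [integral_gaussian_complex hb, Ne, Complex.cpow_eq_zero_iff]
  exact fun h => div_ne_zero (Complex.ofReal_ne_zero.2 Real.pi_ne_zero) hb0 h.1

theorem tendsto_gaussianMordellIntegral {τ : ℂ} (hτ : 0 < τ.re) :
    Tendsto (gaussianMordellIntegral τ) atTop
      (𝓝 (∫ s : ℝ, -Complex.exp (-(π * τ) * (s : ℂ) ^ 2))) := by
  have hshift : ∀ t : ℝ, gaussianMordellIntegral τ t = ∫ s : ℝ,
      Complex.exp (-(π * τ) * (s : ℂ) ^ 2) /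
        (Complex.exp (2 * π * I * mordellPath (s + t)) - 1) := by
    intro t
    rw [gaussianMordellIntegral, ← integral_add_right_eq_self _ t]
    simp only [Complex.ofReal_add, add_sub_cancel_right]
  have hre : (π * τ : ℂ).re = π * τ.re := Complex.re_ofReal_mul _ _
  simp only [funext hshift]
  refine tendsto_integral_filter_of_dominated_convergence
    (fun s => 2 * Real.exp (-(π * τ.re) * s ^ 2)) (Eventually.of_forall fun t => ?_)
    (Eventually.of_forall fun t => ae_of_all _ fun s => ?_)
    ((integrable_exp_neg_mul_sq (by positivity)).const_mul 2) (ae_of_all _ fun s => ?_)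
  · have := continuous_mordellPath
    have := fun s : ℝ => exp_mordellPath_sub_one_ne_zero (s + t)
    exact Continuous.aestronglyMeasurable (by fun_prop (disch := assumption))
  · have hden := one_half_le_norm_exp_mordellPath_sub_one (s + t)
    rw [norm_div, Complex.norm_exp, div_le_iff₀ (by linarith)]
    have : (-(π * τ) * (s : ℂ) ^ 2).re = -(π * τ.re) * s ^ 2 := by
      rw [← Complex.ofReal_pow, mul_comm, Complex.re_ofReal_mul, neg_re, hre]; ring
    rw [this]
    nlinarith [Real.exp_pos (-(π * τ.re) * s ^ 2)]
  · have hlim : Tendsto (fun t : ℝ => Complex.exp (2 * π * I * mordellPath (s + t))) atTop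
        (𝓝 0) := by
      rw [tendsto_zero_iff_norm_tendsto_zero]
      simp only [norm_exp_two_pi_I_mul_mordellPath]
      refine Real.tendsto_exp_atBot.comp (tendsto_neg_atTop_atBot.comp ?_)
      exact (tendsto_atTop_add_const_left _ s tendsto_id).const_mul_atTop (by positivity)
    have := (tendsto_const_nhds (x := Complex.exp (-(π * τ) * (s : ℂ) ^ 2))).div
      (hlim.sub_const 1) (by norm_num)
    rwa [zero_sub, div_neg, div_one] at this

theorem G_sqrt_mul_mordellPath {τ : ℂ} (hτ : 0 < τ.re) (t : ℝ) :
    G (τ ^ ((1:ℂ)/2) * mordellPath t) τ = τ ^ ((1:ℂ)/4) * mordellDir *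
      Complex.exp (π * I * τ * mordellPath t ^ 2 / 2 + π * I / 8) *
        gaussianMordellIntegral τ t := by
  have hτ0 : τ ≠ 0 := fun h => by simp [h] at hτ
  have hsqrt : τ ^ ((1:ℂ)/2) * τ ^ ((1:ℂ)/2) = τ := by
    rw [← Complex.cpow_add _ _ hτ0]; norm_num
  rw [G, ← mul_assoc, hsqrt, upsilon_mul_mordellPath, mul_pow, sq (τ ^ ((1:ℂ)/2)), hsqrt]
  have : -π * I * (τ * mordellPath t ^ 2) / 2 + π * I / 8 =
      (π * I * τ * mordellPath t ^ 2 / 2 + π * I / 8) + -(π * I * τ * mordellPath t ^ 2) := by ring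
  rw [this, Complex.exp_add, Complex.exp_neg]
  field_simp [Complex.exp_ne_zero]

theorem re_exponent_mordellPath (τ : ℂ) (t : ℝ) :
    (π * I * τ * mordellPath t ^ 2 / 2 + π * I / 8).re =
      π * τ.re / 2 * t ^ 2 + (π * I * τ * mordellDir / 2).re * t + (π * I * (τ + 1) / 8).re := by
  have : π * I * τ * mordellPath t ^ 2 / 2 + π * I / 8 =
      ((π * t ^ 2 / 2 : ℝ) : ℂ) * τ + (t : ℂ) * (π * I * τ * mordellDir / 2)
        + π * I * (τ + 1) / 8 := by
    rw [mordellPath_sq]; push_cast; linear_combination (-π * τ * t ^ 2 / 2 : ℂ) * Complex.I_sq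
  rw [this, Complex.add_re, Complex.add_re, Complex.re_ofReal_mul, Complex.re_ofReal_mul]
  ring

theorem norm_G_sqrt_mul_mordellPath {τ : ℂ} (hτ : 0 < τ.re) (t : ℝ) :
    ‖G (τ ^ ((1:ℂ)/2) * mordellPath t) τ‖ = ‖τ ^ ((1:ℂ)/4)‖ *
      Real.exp (π * τ.re / 2 * t ^ 2 + (π * I * τ * mordellDir / 2).re * t
        + (π * I * (τ + 1) / 8).re) * ‖gaussianMordellIntegral τ t‖ := by
  rw [G_sqrt_mul_mordellPath hτ, norm_mul, norm_mul, norm_mul, norm_mordellDir, mul_one,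
    Complex.norm_exp, re_exponent_mordellPath]

theorem tendsto_quadratic_atTop {a : ℝ} (ha : 0 < a) (b d : ℝ) :
    Tendsto (fun t : ℝ => a * t ^ 2 + b * t + d) atTop atTop := by
  refine tendsto_atTop_add_const_right _ d ?_
  have := tendsto_id.atTop_mul_atTop₀
    (tendsto_atTop_add_const_right _ b (tendsto_id.const_mul_atTop ha))
  refine this.congr fun t => ?_
  simp only [id]; ring

theorem not_forall_norm_G_le_mul_exp {τ : ℂ} (hτ : 0 < τ.re) (C K : ℝ) :
    ¬ ∀ u, ‖G u τ‖ ≤ C * Real.exp (K * ‖u‖) := by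
  intro hbound
  have hτ0 : τ ≠ 0 := fun h => by simp [h] at hτ
  set ℓ := ‖∫ s : ℝ, -Complex.exp (-(π * τ) * (s : ℂ) ^ 2)‖
  have hℓ : 0 < ℓ := norm_pos_iff.2 <| by
    rw [integral_neg, neg_ne_zero]
    exact gaussian_integral_ne_zero (by rw [Complex.re_ofReal_mul]; positivity)
  set A := ‖τ ^ ((1:ℂ)/4)‖
  have hA : 0 < A := norm_pos_iff.2 fun h => hτ0 ((Complex.cpow_eq_zero_iff _ _).1 h).1
  set c := ‖τ ^ ((1:ℂ)/2)‖
  set p := (π * I * τ * mordellDir / 2).re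
  set q := (π * I * (τ + 1) / 8).re
  have hJ : ∀ᶠ t in atTop, ℓ / 2 ≤ ‖gaussianMordellIntegral τ t‖ :=
    (tendsto_gaussianMordellIntegral hτ).norm.eventually (eventually_ge_nhds (by linarith))
  have hgrowth : ∀ᶠ t in atTop, C / (A * (ℓ / 2)) <
      Real.exp (π * τ.re / 2 * t ^ 2 + p * t + q - |K| * (c * (1/2 + t))) := by
    have hquad : Tendsto (fun t => π * τ.re / 2 * t ^ 2 + p * t + q - |K| * (c * (1/2 + t)))
        atTop atTop := (tendsto_quadratic_atTop (a := π * τ.re / 2) (by positivity) (p - |K| * c)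
          (q - |K| * c / 2)).congr fun t => by ring
    exact (Real.tendsto_exp_atTop.comp hquad).eventually_gt_atTop _
  obtain ⟨t, hJt, hgt, ht⟩ := (hJ.and (hgrowth.and (eventually_ge_atTop 0))).exists
  have hupper : ‖G (τ ^ ((1:ℂ)/2) * mordellPath t) τ‖ ≤ C * Real.exp (|K| * (c * (1/2 + t))) := by
    have hC : 0 ≤ C := nonneg_of_mul_nonneg_left ((norm_nonneg _).trans (hbound 0)) (Real.exp_pos _)
    have hpath : ‖τ ^ ((1:ℂ)/2) * mordellPath t‖ ≤ c * (1/2 + t) := by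
      rw [norm_mul]
      exact mul_le_mul_of_nonneg_left ((norm_mordellPath_le t).trans_eq (by rw [abs_of_nonneg ht]))
        (norm_nonneg _)
    refine (hbound _).trans (mul_le_mul_of_nonneg_left (Real.exp_le_exp.2 ?_) hC)
    exact (mul_le_mul_of_nonneg_right (le_abs_self K) (norm_nonneg _)).trans
      (mul_le_mul_of_nonneg_left hpath (abs_nonneg K))
  have hlower : A * Real.exp (π * τ.re / 2 * t ^ 2 + p * t + q) * (ℓ / 2) ≤
      ‖G (τ ^ ((1:ℂ)/2) * mordellPath t) τ‖ := by
    rw [norm_G_sqrt_mul_mordellPath hτ]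
    gcongr
  rw [Real.exp_sub, lt_div_iff₀ (Real.exp_pos _), div_mul_eq_mul_div,
    div_lt_iff₀ (by positivity)] at hgt
  nlinarith

theorem statement13 (τ : ℂ) (hτ : 0 < τ.re) (m : ℕ) (c : ℕ → ℂ)
    (h : ∀ u : ℂ, ∑ j ∈ Finset.range (m+1), c j * Gderiv j u τ = 0) :
    ∀ j ≤ m, c j = 0 := by
  by_contra! hne
  obtain ⟨j, hjm, hj⟩ := hne
  set n := Nat.findGreatest (fun j => c j ≠ 0) m
  have hn : c n ≠ 0 := Nat.findGreatest_spec (P := fun j => c j ≠ 0) hjm hj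
  have hnm : n ≤ m := Nat.findGreatest_le m
  have htop : ∀ k, n < k → k ≤ m → c k = 0 := fun k hnk hkm =>
    not_not.1 (Nat.findGreatest_is_greatest (P := fun j => c j ≠ 0) hnk hkm)
  have hode : ∀ u, ∑ j ∈ range (n + 1), c j * iteratedDeriv j (fun w => G w τ) u = 0 := by
    intro u
    rw [← h u]
    refine sum_subset (range_subset_range.2 (by omega)) fun k hkm hkn => ?_
    rw [mem_range] at hkm hkn
    rw [htop k (by omega) (by omega), zero_mul]
  obtain ⟨C, K, hbound⟩ := exists_norm_le_mul_exp_of_linearODE (differentiable_G hτ) hn hode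
  exact not_forall_norm_G_le_mul_exp hτ C K hbound
end
end

section
/- Let I ⊂ ℝ be a finite interval and n ∈ ℤ_{≥0}. There are constants C₁, C₂ depending only on I and n such that for all s = σ + it with σ ∈ I and t > 0: (i) if n ≥ 1, n ≤ (27/50)·t and z ∈ ℂ satisfies |z| ≤ (20/21)·(2n√t/5)^{1/3}, then |r_n(z,s)| ≤ C₁·|z|^n·t^{−n/6}; and (ii) if |z| ≤ √t/2, then |r_n(z,s)| ≤ C₂·e^{14|z|²/29}. -/
/-!
Write `ξ = √t · u`. Then `Log w(ξ, s) = (s - 1) Log (1 + u) - i t (u - u² / 2)`, so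
`log |w(ξ, s)| = (σ - 1) log |1 + u| - t · Im (Log (1 + u) - u + u² / 2)`. For `|u| ≤ 3/5` the
first term is at most `|σ - 1| log (5/2)`, and the cubic remainder of the logarithm bounds the
second by `5 |ξ|³ / (6 √t)`. Cauchy's estimates on the circle `|ξ| = ρ ≤ (3/5) √t` then bound
`r_n(z, s)` for `|z| ≤ (20/21) ρ` by `21 (5/2)^|σ-1| exp (5 ρ³ / (6 √t)) (|z| / ρ)^n`.
Part (i) takes `ρ = (2 n √t / 5)^(1/3)`, where the exponent is exactly `n / 3`; part (ii) takes
`ρ = 21 |z| / 20`.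
-/

open Complex Real MeasureTheory

noncomputable section

open Metric Nat in
theorem Complex.norm_taylor_remainder_le {f : ℂ → ℂ} {c z : ℂ} {R ρ M θ : ℝ}
    (hf : DifferentiableOn ℂ f (ball c R)) (hρ : 0 < ρ) (hρR : ρ < R)
    (hM : ∀ ξ ∈ sphere c ρ, ‖f ξ‖ ≤ M) (hθ : θ < 1) (hz : ‖z - c‖ ≤ θ * ρ) (n : ℕ) :
    ‖f z - ∑ k ∈ Finset.range n, iteratedDeriv k f c / k ! * (z - c) ^ k‖
      ≤ M * (‖z - c‖ / ρ) ^ n * (1 - θ)⁻¹ := by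
  set q := ‖z - c‖ / ρ
  have hq0 : 0 ≤ q := by positivity
  have hqθ : q ≤ θ := (div_le_iff₀ hρ).2 hz
  have hM0 : 0 ≤ M := (norm_nonneg _).trans (hM (c + ρ) (by simp [abs_of_pos hρ]))
  set a : ℕ → ℂ := fun k => iteratedDeriv k f c / k ! * (z - c) ^ k
  have ha : ∀ k, ‖a k‖ ≤ M * q ^ k := by
    intro k
    have hcauchy := norm_iteratedDeriv_le_of_forall_mem_sphere_norm_le k hρ
      (hf.diffContOnCl_ball (closedBall_subset_ball hρR)) hM
    calc ‖a k‖ = ‖iteratedDeriv k f c‖ / k ! * ‖z - c‖ ^ k := by simp [a]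
      _ ≤ k ! * M / ρ ^ k / k ! * ‖z - c‖ ^ k := by gcongr
      _ = M * q ^ k := by rw [div_pow]; field_simp
  have hsum : HasSum a (f z) := by
    have hzR : z ∈ ball c R := mem_ball_iff_norm.2 (by nlinarith)
    refine (hasSum_taylorSeries_on_ball hf hzR).congr_fun fun k => ?_
    simp only [a, smul_eq_mul]
    ring
  have htail : HasSum (fun k => a (k + n)) (f z - ∑ k ∈ Finset.range n, a k) :=
    (hasSum_nat_add_iff' n).2 hsum
  calc ‖f z - ∑ k ∈ Finset.range n, a k‖ ≤ M * q ^ n * (1 - q)⁻¹ := by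
        rw [← htail.tsum_eq]
        refine tsum_of_norm_bounded ((hasSum_geometric_of_lt_one hq0 (by linarith)).mul_left _)
          fun k => (ha _).trans_eq (by ring)
    _ ≤ M * q ^ n * (1 - θ)⁻¹ := by gcongr

theorem Complex.norm_log_one_add_sub_add_sq_le {u : ℂ} (hu : ‖u‖ < 1) :
    ‖log (1 + u) - u + u ^ 2 / 2‖ ≤ ‖u‖ ^ 3 * (1 - ‖u‖)⁻¹ / 3 := by
  have h := norm_log_sub_logTaylor_le 2 hu
  have hT : logTaylor 3 u = u - u ^ 2 / 2 := by
    simp only [logTaylor, Finset.sum_range_succ, Finset.sum_range_zero]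
    push_cast
    ring
  rw [hT] at h
  convert h using 2
  · ring
  · norm_num

theorem Complex.abs_log_norm_one_add_le {u : ℂ} {r : ℝ} (hr : r < 1) (hu : ‖u‖ ≤ r) :
    |Real.log ‖1 + u‖| ≤ -Real.log (1 - r) := by
  have hlow : 1 - r ≤ ‖1 + u‖ := by
    have := norm_sub_norm_le (1 : ℂ) (-u)
    rw [sub_neg_eq_add, norm_one, norm_neg] at this
    linarith
  have hup : ‖1 + u‖ ≤ (1 - r)⁻¹ :=
    calc ‖1 + u‖ ≤ 1 + r := (norm_add_le _ _).trans (by rw [norm_one]; linarith)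
      _ ≤ (1 - r)⁻¹ := by
        rw [← one_div, le_div_iff₀ (by linarith)]
        nlinarith [sq_nonneg r]
  refine abs_le.2 ⟨by linarith [Real.log_le_log (by linarith) hlow], ?_⟩
  rw [← Real.log_inv]
  exact Real.log_le_log (by linarith) hup

theorem differentiableOn_wfun {s : ℂ} (ht : 0 < s.im) :
    DifferentiableOn ℂ (wfun s) (Metric.ball 0 √s.im) := by
  intro z hz
  have hslit : 1 + z / (√s.im : ℂ) ∈ slitPlane := by
    refine mem_slitPlane_of_norm_lt_one ?_
    rw [norm_div, norm_real, Real.norm_of_nonneg (Real.sqrt_nonneg _),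
      div_lt_one (Real.sqrt_pos.2 ht)]
    simpa using hz
  unfold wfun
  exact DifferentiableAt.differentiableWithinAt (by fun_prop (disch := exact hslit))

theorem norm_wfun_sqrt_mul {s : ℂ} (ht : 0 < s.im) (u : ℂ) :
    ‖wfun s (√s.im * u)‖ = Real.exp ((s.re - 1) * Real.log ‖1 + u‖
      - s.im * (log (1 + u) - u + u ^ 2 / 2).im) := by
  have hsq : √s.im ^ 2 = s.im := Real.sq_sqrt ht.le
  have hne : (√s.im : ℂ) ≠ 0 := ofReal_ne_zero.2 (Real.sqrt_pos.2 ht).ne'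
  rw [wfun, norm_exp, mul_div_cancel_left₀ _ hne, ← log_re]
  congr 1
  simp only [pow_two, add_re, sub_re, mul_re, one_re, sub_im, one_im, I_re, I_im, ofReal_re,
    ofReal_im, mul_im, add_im, div_ofNat_re, div_ofNat_im]
  linear_combination (u.im - u.im * u.re) * hsq

theorem norm_wfun_le {s ξ : ℂ} (ht : 0 < s.im) (hξ : ‖ξ‖ ≤ 3 / 5 * √s.im) :
    ‖wfun s ξ‖ ≤ (5 / 2 : ℝ) ^ |s.re - 1| * Real.exp (5 * ‖ξ‖ ^ 3 / (6 * √s.im)) := by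
  have hrt : 0 < √s.im := Real.sqrt_pos.2 ht
  set u := ξ / (√s.im : ℂ)
  have hξu : ξ = √s.im * u := (mul_div_cancel₀ ξ (ofReal_ne_zero.2 hrt.ne')).symm
  have hu : ‖u‖ = ‖ξ‖ / √s.im := by
    rw [norm_div, norm_real, Real.norm_of_nonneg hrt.le]
  have hu35 : ‖u‖ ≤ 3 / 5 := by rw [hu, div_le_iff₀ hrt]; linarith
  have hlog : |Real.log ‖1 + u‖| ≤ Real.log (5 / 2) :=
    (abs_log_norm_one_add_le (by norm_num) hu35).trans_eq (by norm_num [← Real.log_inv])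
  have hre : (s.re - 1) * Real.log ‖1 + u‖ ≤ Real.log (5 / 2) * |s.re - 1| :=
    calc (s.re - 1) * Real.log ‖1 + u‖ ≤ |s.re - 1| * |Real.log ‖1 + u‖| := by
          rw [← abs_mul]; exact le_abs_self _
      _ ≤ Real.log (5 / 2) * |s.re - 1| := by rw [mul_comm]; gcongr
  have him : -(s.im * (log (1 + u) - u + u ^ 2 / 2).im) ≤ 5 * ‖ξ‖ ^ 3 / (6 * √s.im) :=
    calc -(s.im * (log (1 + u) - u + u ^ 2 / 2).im)
        ≤ s.im * ‖log (1 + u) - u + u ^ 2 / 2‖ := by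
          rw [← mul_neg]; gcongr; exact (neg_le_abs _).trans (abs_im_le_norm _)
      _ ≤ s.im * (‖u‖ ^ 3 * (1 - 3 / 5)⁻¹ / 3) := by
          gcongr
          exact (norm_log_one_add_sub_add_sq_le (by linarith)).trans (by gcongr)
      _ = 5 * ‖ξ‖ ^ 3 / (6 * √s.im) := by
          rw [hu]; field_simp; rw [Real.sq_sqrt ht.le]; ring
  have hw := norm_wfun_sqrt_mul ht u
  rw [← hξu] at hw
  rw [hw, Real.rpow_def_of_pos (by norm_num), ← Real.exp_add]
  gcongr
  linarith

theorem norm_rn_le {n : ℕ} {s z : ℂ} {ρ : ℝ} (ht : 0 < s.im) (hρ : 0 < ρ)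
    (hρt : ρ ≤ 3 / 5 * √s.im) (hz : ‖z‖ ≤ 20 / 21 * ρ) :
    ‖rn n s z‖ ≤ 21 * (5 / 2 : ℝ) ^ |s.re - 1| * Real.exp (5 * ρ ^ 3 / (6 * √s.im))
      * (‖z‖ / ρ) ^ n := by
  have hrt : 0 < √s.im := Real.sqrt_pos.2 ht
  have hM : ∀ ξ ∈ Metric.sphere (0 : ℂ) ρ,
      ‖wfun s ξ‖ ≤ (5 / 2 : ℝ) ^ |s.re - 1| * Real.exp (5 * ρ ^ 3 / (6 * √s.im)) := by
    intro ξ hξ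
    rw [mem_sphere_zero_iff_norm] at hξ
    exact hξ ▸ norm_wfun_le ht (hξ ▸ hρt)
  have h := norm_taylor_remainder_le (differentiableOn_wfun ht) hρ (by linarith) hM
    (θ := 20 / 21) (by norm_num) (by simpa using hz) n
  simp only [sub_zero] at h
  refine h.trans_eq ?_
  norm_num
  ring

theorem norm_rn_apply_zero_le_one (n : ℕ) (s : ℂ) : ‖rn n s 0‖ ≤ 1 := by
  cases n with
  | zero => simp [rn, wfun]
  | succ n => simp [rn, wfun, Finset.sum_range_succ']

theorem norm_rn_le_of_norm_le_cbrt {n : ℕ} (hn : 1 ≤ n) {s z : ℂ} (ht : 0 < s.im)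
    (hnt : (n : ℝ) ≤ 27 / 50 * s.im)
    (hz : ‖z‖ ≤ 20 / 21 * (2 * (n : ℝ) * √s.im / 5) ^ ((1 : ℝ) / 3)) :
    ‖rn n s z‖ ≤ 21 * (5 / 2 : ℝ) ^ |s.re - 1| * Real.exp (n / 3)
      * ((2 * (n : ℝ) / 5) ^ ((n : ℝ) / 3))⁻¹ * ‖z‖ ^ n * s.im ^ (-(n : ℝ) / 6) := by
  set R := (2 * (n : ℝ) * √s.im / 5) ^ ((1 : ℝ) / 3)
  have hrt : 0 < √s.im := Real.sqrt_pos.2 ht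
  have hsq : √s.im ^ 2 = s.im := Real.sq_sqrt ht.le
  have hn0 : (0 : ℝ) < n := by exact_mod_cast hn
  have hx : 0 < 2 * (n : ℝ) * √s.im / 5 := by positivity
  have hR : 0 < R := Real.rpow_pos_of_pos hx _
  have hR3 : R ^ 3 = 2 * n * √s.im / 5 := by
    rw [← Real.rpow_natCast, ← Real.rpow_mul hx.le]; norm_num
  have hRt : R ≤ 3 / 5 * √s.im := by
    refine (pow_le_pow_iff_left₀ hR.le (by positivity) three_ne_zero).1 ?_
    rw [hR3, mul_pow, show √s.im ^ 3 = s.im * √s.im by rw [pow_succ, hsq]]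
    nlinarith
  have hRn : R ^ n = (2 * n / 5) ^ ((n : ℝ) / 3) * s.im ^ ((n : ℝ) / 6) := by
    rw [← Real.rpow_natCast, ← Real.rpow_mul hx.le, mul_div_right_comm,
      Real.mul_rpow (by positivity) hrt.le, Real.sqrt_eq_rpow, ← Real.rpow_mul ht.le]
    congr 2 <;> ring
  calc ‖rn n s z‖ ≤ 21 * (5 / 2 : ℝ) ^ |s.re - 1| * Real.exp (5 * R ^ 3 / (6 * √s.im))
        * (‖z‖ / R) ^ n := norm_rn_le ht hR hRt hz
    _ = _ := by
      rw [hR3, div_pow, hRn, neg_div, Real.rpow_neg ht.le]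
      field_simp
      ring_nf

theorem norm_rn_le_exp (n : ℕ) {s z : ℂ} (ht : 0 < s.im) (hz : ‖z‖ ≤ √s.im / 2) :
    ‖rn n s z‖ ≤ 21 * (5 / 2 : ℝ) ^ |s.re - 1| * Real.exp (14 * ‖z‖ ^ 2 / 29) := by
  have hK : 1 ≤ (5 / 2 : ℝ) ^ |s.re - 1| := Real.one_le_rpow (by norm_num) (abs_nonneg _)
  rcases eq_or_ne z 0 with rfl | hz0
  · refine (norm_rn_apply_zero_le_one n s).trans ?_
    rw [norm_zero, zero_pow two_ne_zero, mul_zero, zero_div, Real.exp_zero]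
    linarith
  have hz_pos : 0 < ‖z‖ := norm_pos_iff.2 hz0
  have hrt : 0 < √s.im := Real.sqrt_pos.2 ht
  set ρ := 21 / 20 * ‖z‖ with hρ
  have hexp : 5 * ρ ^ 3 / (6 * √s.im) ≤ 14 * ‖z‖ ^ 2 / 29 := by
    rw [hρ, div_le_div_iff₀ (by positivity) (by norm_num)]
    nlinarith [mul_le_mul_of_nonneg_left hz (sq_nonneg ‖z‖)]
  have hq : ‖z‖ / ρ = 20 / 21 := by rw [hρ]; field_simp
  have hq_pow : (‖z‖ / ρ) ^ n ≤ 1 := pow_le_one₀ (by positivity) (by rw [hq]; norm_num)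
  calc ‖rn n s z‖ ≤ 21 * (5 / 2 : ℝ) ^ |s.re - 1| * Real.exp (5 * ρ ^ 3 / (6 * √s.im))
        * (‖z‖ / ρ) ^ n := norm_rn_le ht (by positivity) (by linarith) (by linarith)
    _ ≤ 21 * (5 / 2 : ℝ) ^ |s.re - 1| * Real.exp (14 * ‖z‖ ^ 2 / 29) * 1 := by gcongr
    _ = 21 * (5 / 2 : ℝ) ^ |s.re - 1| * Real.exp (14 * ‖z‖ ^ 2 / 29) := mul_one _

theorem statement14 (A B : ℝ) (n : ℕ) :
    ∃ C₁ C₂ : ℝ, ∀ s : ℂ, s.re ∈ Set.Icc A B → 0 < s.im →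
      ((1 ≤ n → (n:ℝ) ≤ 27/50 * s.im →
          ∀ z : ℂ, ‖z‖ ≤ 20/21 * (2*(n:ℝ)*Real.sqrt s.im/5) ^ ((1:ℝ)/3) →
            ‖rn n s z‖ ≤ C₁ * ‖z‖^n * s.im ^ (-(n:ℝ)/6)) ∧
        (∀ z : ℂ, ‖z‖ ≤ Real.sqrt s.im / 2 →
            ‖rn n s z‖ ≤ C₂ * Real.exp (14*‖z‖^2/29))) := by
  set K := (5 / 2 : ℝ) ^ (|A| + |B| + 1)
  refine ⟨21 * K * Real.exp (n / 3) * ((2 * (n : ℝ) / 5) ^ ((n : ℝ) / 3))⁻¹, 21 * K,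
    fun s ⟨hA, hB⟩ ht => ?_⟩
  have hσ : |s.re - 1| ≤ |A| + |B| + 1 :=
    abs_le.2 ⟨by linarith [neg_abs_le A, abs_nonneg B], by linarith [le_abs_self B, abs_nonneg A]⟩
  have hK : (5 / 2 : ℝ) ^ |s.re - 1| ≤ K := Real.rpow_le_rpow_of_exponent_le (by norm_num) hσ
  exact ⟨fun hn hnt z hz => (norm_rn_le_of_norm_le_cbrt hn ht hnt hz).trans (by gcongr),
    fun z hz => (norm_rn_le_exp n ht hz).trans (by gcongr)⟩

end
end
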